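/- arXiv:1607.05451 — 2 statements merged into one kernel-verified Lean document; each statement's English description precedes it below -/
import Mathlib

section
/- Let d, n, r, t be natural numbers with d ≥ 1, 1 ≤ n ≤ 2^d and r ≤ t. Suppose there is a deterministic membership filter with M memory states for n-point sets in {0,1}^d that has no false negatives at radius r and has no false positives at distance t, i.e., for every S ⊆ {0,1}^d with |S| = n and every q ∈ {0,1}^d with D(q,S) > t, the query q is answered negatively. Then (M : ℝ) ≥ (2^d / (e · n · b(t,d)))^n, where e is Euler's number. -/
/-- `ballSize t d` is the cardinality of a Hamming ball of radius `t` in `{0,1}^d`,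
i.e. `∑_{i=0}^{min(t,d)} C(d,i)` (terms with `i > d` vanish). -/
def ballSize (t d : ℕ) : ℕ := ∑ i ∈ Finset.range (t + 1), d.choose i

/-!
Counting argument. Fix a memory state `m` and let `A m` be the set of points it accepts. If some
`n`-set `S₀` is encoded as `m`, then by the absence of false positives `A m` lies in the union
of the radius-`t` balls around `S₀`, so `|A m| ≤ n · b(t,d)`; by the absence of false negatives
every `n`-set encoded as `m` is contained in `A m`. Hence `C(2^d, n) ≤ M · C(n · b(t,d), n)`,
and the bounds `(N/n)^n ≤ C(N,n)` and `C(K,n) ≤ (eK/n)^n` turn this into the claim.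
-/

open Finset

namespace Nat

theorem pow_mul_factorial_le_pow_mul_descFactorial {n N : ℕ} (h : n ≤ N) :
    N ^ n * n ! ≤ n ^ n * N.descFactorial n := by
  rw [← descFactorial_self, descFactorial_eq_prod_range, descFactorial_eq_prod_range,
    pow_eq_prod_const, pow_eq_prod_const, ← prod_mul_distrib, ← prod_mul_distrib]
  refine prod_le_prod' fun i _ => ?_
  rw [Nat.mul_sub, Nat.mul_sub, mul_comm N n]
  exact Nat.sub_le_sub_left (Nat.mul_le_mul_right i h) _

theorem div_pow_le_choose {n N : ℕ} (h : n ≤ N) : ((N : ℝ) / n) ^ n ≤ N.choose n := by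
  rcases n.eq_zero_or_pos with rfl | hn
  · simp
  rw [div_pow, div_le_iff₀ (by positivity), choose_eq_descFactorial_div_factorial,
    Nat.cast_div (factorial_dvd_descFactorial N n) (by positivity),
    div_mul_eq_mul_div, le_div_iff₀ (by positivity)]
  exact_mod_cast (pow_mul_factorial_le_pow_mul_descFactorial h).trans_eq (mul_comm _ _)

theorem choose_le_exp_one_mul_div_pow (K n : ℕ) :
    (K.choose n : ℝ) ≤ (Real.exp 1 * K / n) ^ n := by
  rcases n.eq_zero_or_pos with rfl | hn
  · simp
  have hexp : (n : ℝ) ^ n / n ! ≤ Real.exp 1 ^ n := by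
    simpa [← Real.exp_nat_mul] using Real.pow_div_factorial_le_exp _ (Nat.cast_nonneg (α := ℝ) n) n
  calc (K.choose n : ℝ) ≤ (K : ℝ) ^ n / n ! := choose_le_pow_div n K
    _ = (K / n : ℝ) ^ n * ((n : ℝ) ^ n / n !) := by
        rw [← mul_div_assoc, ← mul_pow, div_mul_cancel₀ _ (by positivity)]
    _ ≤ (K / n : ℝ) ^ n * Real.exp 1 ^ n := by gcongr
    _ = (Real.exp 1 * K / n) ^ n := by rw [← mul_pow]; ring

end Nat

theorem choose_card_le_card_mul_choose_of_forall_subset {V β : Type*} [Fintype V] [Fintype β]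
    {n K : ℕ} (enc : {S : Finset V // S.card = n} → β) (A : β → Finset V)
    (hA : ∀ S, #(A (enc S)) ≤ K) (hsub : ∀ S, S.1 ⊆ A (enc S)) :
    (Fintype.card V).choose n ≤ Fintype.card β * K.choose n := by
  classical
  rw [← Fintype.card_finset_len, Fintype.card, mul_comm]
  refine (card_le_mul_card_image (f := enc) univ _ fun m hm => ?_).trans
    (Nat.mul_le_mul_left _ (card_le_univ _))
  obtain ⟨S₀, -, rfl⟩ := mem_image.mp hm
  calc #{S | enc S = enc S₀} ≤ #((A (enc S₀)).powersetCard n) := by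
        refine card_le_card_of_injOn Subtype.val (fun S hS => ?_) Subtype.val_injective.injOn
        rw [mem_coe, mem_filter] at hS
        exact mem_powersetCard.mpr ⟨hS.2 ▸ hsub S, S.2⟩
    _ ≤ K.choose n := by
        rw [card_powersetCard]
        exact Nat.choose_le_choose n (hA S₀)

theorem card_hammingBall_le_ballSize {d : ℕ} (p : Fin d → Bool) (t : ℕ) :
    #{q | hammingDist q p ≤ t} ≤ ballSize t d := by
  let diff : (Fin d → Bool) → Finset (Fin d) := fun q => {i | q i ≠ p i}
  have hdiff_inj : Function.Injective diff := by
    intro q q' h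
    funext i
    have hi : q i ≠ p i ↔ q' i ≠ p i := by simpa [diff] using congrArg (i ∈ ·) h
    revert hi
    cases q i <;> cases q' i <;> cases p i <;> simp
  have hmaps : ∀ q ∈ ({q | hammingDist q p ≤ t} : Finset (Fin d → Bool)),
      diff q ∈ (range (t + 1)).biUnion fun i => powersetCard i univ := by
    intro q hq
    simp only [mem_filter, mem_univ, true_and] at hq
    exact mem_biUnion.mpr ⟨#(diff q), mem_range.mpr (Nat.lt_succ_of_le hq),
      mem_powersetCard.mpr ⟨subset_univ _, rfl⟩⟩
  calc #{q | hammingDist q p ≤ t}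
      ≤ #((range (t + 1)).biUnion fun i => powersetCard i (univ : Finset (Fin d))) :=
        card_le_card_of_injOn diff hmaps hdiff_inj.injOn
    _ ≤ ∑ i ∈ range (t + 1), #(powersetCard i (univ : Finset (Fin d))) := card_biUnion_le
    _ = ballSize t d := by simp [ballSize]

theorem card_le_card_mul_ballSize {d t : ℕ} {A S : Finset (Fin d → Bool)}
    (h : ∀ q ∈ A, ∃ p ∈ S, hammingDist q p ≤ t) : #A ≤ #S * ballSize t d :=
  calc #A ≤ #(S.biUnion fun p => {q | hammingDist q p ≤ t}) :=
        card_le_card fun q hq => by simpa using h q hq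
    _ ≤ ∑ p ∈ S, #{q | hammingDist q p ≤ t} := card_biUnion_le
    _ ≤ ∑ _p ∈ S, ballSize t d := sum_le_sum fun p _ => card_hammingBall_le_ballSize p t
    _ = #S * ballSize t d := by rw [sum_const, smul_eq_mul]

theorem one_le_ballSize (t d : ℕ) : 1 ≤ ballSize t d :=
  d.choose_zero_right.symm.trans_le <| single_le_sum (f := d.choose) (fun _ _ => Nat.zero_le _) (mem_range.mpr t.succ_pos)

theorem div_pow_le_of_choose_le_mul_choose {N n b M : ℕ} (hn : n ≤ N) (hb : 1 ≤ b)
    (h : N.choose n ≤ M * (n * b).choose n) :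
    ((N : ℝ) / (Real.exp 1 * n * b)) ^ n ≤ M := by
  have hchoose : ((n * b).choose n : ℝ) ≤ (Real.exp 1 * b) ^ n := by
    rcases n.eq_zero_or_pos with rfl | hn0
    · simp
    convert Nat.choose_le_exp_one_mul_div_pow (n * b) n using 2
    push_cast
    field_simp
  have hsplit : (N : ℝ) / (Real.exp 1 * n * b) = N / n / (Real.exp 1 * b) := by
    rw [div_div]; ring_nf
  rw [hsplit, div_pow, div_le_iff₀ (by positivity)]
  calc ((N : ℝ) / n) ^ n ≤ N.choose n := Nat.div_pow_le_choose hn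
    _ ≤ M * (n * b).choose n := by exact_mod_cast h
    _ ≤ M * (Real.exp 1 * b) ^ n := by gcongr

theorem stmt0_general (d n r t M : ℕ) (hn2 : n ≤ 2 ^ d)
    (enc : {S : Finset (Fin d → Bool) // S.card = n} → Fin M)
    (qry : Fin M → (Fin d → Bool) → Bool)
    (hFN : ∀ (S : {S : Finset (Fin d → Bool) // S.card = n}) (q : Fin d → Bool),
      (∃ p ∈ S.1, hammingDist q p ≤ r) → qry (enc S) q = true)
    (hFP : ∀ (S : {S : Finset (Fin d → Bool) // S.card = n}) (q : Fin d → Bool),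
      (∀ p ∈ S.1, t < hammingDist q p) → qry (enc S) q = false) :
    ((2 : ℝ) ^ d / (Real.exp 1 * n * ballSize t d)) ^ n ≤ (M : ℝ) := by
  let accepted (m : Fin M) : Finset (Fin d → Bool) := {q | qry m q = true}
  have haccepted_card : ∀ S, #(accepted (enc S)) ≤ n * ballSize t d := fun S =>
    S.2 ▸ card_le_card_mul_ballSize fun q hq => by
      by_contra! hfar
      simp [accepted, hFP S q hfar] at hq
  have hsubset : ∀ S, S.1 ⊆ accepted (enc S) := fun S p hp => by
    simpa [accepted] using hFN S p ⟨p, hp, by simp⟩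
  have hcount := choose_card_le_card_mul_choose_of_forall_subset enc accepted
    haccepted_card hsubset
  simp only [Fintype.card_fun, Fintype.card_bool, Fintype.card_fin] at hcount
  exact_mod_cast div_pow_le_of_choose_le_mul_choose hn2 (one_le_ballSize t d) hcount

/-- Any deterministic membership filter with `M` memory states for
`n`-point sets in `{0,1}^d` having no false negatives at radius `r` and no false
positives at distance `t` satisfies `M ≥ (2^d / (e·n·b(t,d)))^n`. -/
theorem stmt0 (d n r t M : ℕ) (hd : 1 ≤ d) (hn1 : 1 ≤ n) (hn2 : n ≤ 2 ^ d)
    (hrt : r ≤ t)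
    (enc : {S : Finset (Fin d → Bool) // S.card = n} → Fin M)
    (qry : Fin M → (Fin d → Bool) → Bool)
    (hFN : ∀ (S : {S : Finset (Fin d → Bool) // S.card = n}) (q : Fin d → Bool),
      (∃ p ∈ S.1, hammingDist q p ≤ r) → qry (enc S) q = true)
    (hFP : ∀ (S : {S : Finset (Fin d → Bool) // S.card = n}) (q : Fin d → Bool),
      (∀ p ∈ S.1, t < hammingDist q p) → qry (enc S) q = false) :
    ((2 : ℝ) ^ d / (Real.exp 1 * n * ballSize t d)) ^ n ≤ (M : ℝ) :=
  stmt0_general d n r t M hn2 enc qry hFN hFP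
end

section
/- Let d be an even natural number with d ≥ 2, let r be a natural number with 1 ≤ r ≤ d/2, and let A ⊆ {0,1}^d be a set with |A| ≤ 2^(d−1). Then the number of points x ∈ {0,1}^d such that the Hamming ball B(x,r) of radius r around x is contained in A is at most ∑_{i=0}^{d/2 − r} C(d,i), the cardinality of a Hamming ball of radius d/2 − r in {0,1}^d. -/
/-!
Write `N(S)` for the closed Hamming neighbourhood of `S ⊆ {0,1}^d`. `N` maps the set of centres
of radius-`(j+1)` balls inside `A` into the set of centres of radius-`j` balls inside `A`. Harper's
vertex-isoperimetric inequality says that `|N(S)| ≤ ∑_{i≤k} C(d,i)` forces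
`|S| ≤ ∑_{i<k} C(d,i)`, so `r` steps starting from `|A| ≤ 2^(d-1) ≤ ∑_{i≤d/2} C(d,i)` give the
bound.

Harper's inequality is proved in a linearly interpolated form by induction on the dimension.
Split `A` along the first coordinate into slices `B`, `C` with `|C| ≤ |B|`; then
`|N(A)| ≥ |N(B)| + |B|` and `|N(A)| ≥ |N(B)| + |N(C)|`. If `B` alone is large, the first
estimate suffices; otherwise the induction hypothesis for both slices, combined with the
log-concavity `C(n,j) C(n,j+2) ≤ C(n,j+1)²`, gives the second.
-/

open Finset Matrix

section Cube

variable {n : ℕ}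

def closedNbhd (A : Finset (Fin n → Bool)) : Finset (Fin n → Bool) :=
  univ.filter fun x => ∃ a ∈ A, hammingDist x a ≤ 1

lemma mem_closedNbhd {A : Finset (Fin n → Bool)} {x : Fin n → Bool} :
    x ∈ closedNbhd A ↔ ∃ a ∈ A, hammingDist x a ≤ 1 := by
  simp [closedNbhd]

lemma subset_closedNbhd (A : Finset (Fin n → Bool)) : A ⊆ closedNbhd A :=
  fun a ha => mem_closedNbhd.2 ⟨a, ha, by simp⟩

lemma vecCons_right_injective (b : Bool) : Function.Injective (vecCons b : (Fin n → Bool) → _) :=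
  fun _ _ h => (vecCons_inj.1 h).2

lemma hammingDist_vecCons (a b : Bool) (x y : Fin n → Bool) :
    hammingDist (vecCons a x) (vecCons b y) = (if a = b then 0 else 1) + hammingDist x y := by
  simp only [hammingDist, card_filter, Fin.sum_univ_succ, cons_val_zero, cons_val_succ]
  split_ifs <;> simp_all

def headSlice (A : Finset (Fin (n + 1) → Bool)) (b : Bool) : Finset (Fin n → Bool) :=
  univ.filter fun x => vecCons b x ∈ A

lemma image_vecCons_headSlice (A : Finset (Fin (n + 1) → Bool)) (b : Bool) :
    (headSlice A b).image (vecCons b) = A.filter fun z => z 0 = b := by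
  ext z
  simp only [headSlice, mem_image, mem_filter, mem_univ, true_and]
  constructor
  · rintro ⟨x, hx, rfl⟩
    exact ⟨hx, rfl⟩
  · rintro ⟨hz, rfl⟩
    exact ⟨vecTail z, by rwa [← cons_head_tail z] at hz, cons_head_tail z⟩

lemma card_headSlice (A : Finset (Fin (n + 1) → Bool)) (b : Bool) :
    (headSlice A b).card = (A.filter fun z => z 0 = b).card := by
  rw [← image_vecCons_headSlice, card_image_of_injective _ (vecCons_right_injective b)]

lemma card_headSlice_add_card_headSlice_not (A : Finset (Fin (n + 1) → Bool)) (b : Bool) :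
    (headSlice A b).card + (headSlice A !b).card = A.card := by
  rw [card_headSlice, card_headSlice]
  rw [← card_filter_add_card_filter_not (s := A) (fun z => z 0 = b)]
  congr 2
  apply filter_congr
  intro z _
  cases z 0 <;> cases b <;> simp

lemma vecCons_mem_closedNbhd {A : Finset (Fin (n + 1) → Bool)} {b : Bool} {x : Fin n → Bool}
    (hx : x ∈ closedNbhd (headSlice A b)) : vecCons b x ∈ closedNbhd A := by
  obtain ⟨a, ha, hxa⟩ := mem_closedNbhd.1 hx
  refine mem_closedNbhd.2 ⟨vecCons b a, by simpa [headSlice] using ha, ?_⟩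
  simpa [hammingDist_vecCons] using hxa

lemma vecCons_flip_mem_closedNbhd {A : Finset (Fin (n + 1) → Bool)} {b : Bool} {x : Fin n → Bool}
    (hx : x ∈ headSlice A b) : vecCons (!b) x ∈ closedNbhd A :=
  mem_closedNbhd.2 ⟨vecCons b x, by simpa [headSlice] using hx, by simp [hammingDist_vecCons]⟩

lemma card_add_card_le_card_closedNbhd {A : Finset (Fin (n + 1) → Bool)} (b : Bool)
    {S T : Finset (Fin n → Bool)} (hS : ∀ x ∈ S, vecCons b x ∈ closedNbhd A)
    (hT : ∀ x ∈ T, vecCons (!b) x ∈ closedNbhd A) :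
    S.card + T.card ≤ (closedNbhd A).card := by
  have hdisj : Disjoint (S.image (vecCons b)) (T.image (vecCons !b)) := by
    simp only [disjoint_left, mem_image]
    rintro _ ⟨x, -, rfl⟩ ⟨y, -, hyx⟩
    simpa using (vecCons_inj.1 hyx).1
  rw [← card_image_of_injective S (vecCons_right_injective b),
    ← card_image_of_injective T (vecCons_right_injective !b), ← card_union_of_disjoint hdisj]
  exact card_le_card (union_subset (by simpa [image_subset_iff] using hS)
    (by simpa [image_subset_iff] using hT))

lemma card_closedNbhd_headSlice_add_card_headSlice_le (A : Finset (Fin (n + 1) → Bool))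
    (b : Bool) : (closedNbhd (headSlice A b)).card + (headSlice A b).card ≤ (closedNbhd A).card :=
  card_add_card_le_card_closedNbhd b (fun _ => vecCons_mem_closedNbhd)
    fun _ => vecCons_flip_mem_closedNbhd

lemma card_closedNbhd_headSlice_add_card_closedNbhd_headSlice_not_le
    (A : Finset (Fin (n + 1) → Bool)) (b : Bool) :
    (closedNbhd (headSlice A b)).card + (closedNbhd (headSlice A !b)).card ≤
      (closedNbhd A).card :=
  card_add_card_le_card_closedNbhd b (fun _ => vecCons_mem_closedNbhd)
    fun _ => vecCons_mem_closedNbhd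

end Cube

/-- The size of a Hamming ball of radius `k - 1` in `{0,1}^n` (for `1 ≤ k`). -/
def chooseSum (n k : ℕ) : ℕ := ∑ i ∈ range k, n.choose i

lemma chooseSum_succ (n k : ℕ) : chooseSum n (k + 1) = chooseSum n k + n.choose k :=
  sum_range_succ _ _

lemma chooseSum_succ_succ (n k : ℕ) :
    chooseSum (n + 1) (k + 1) = chooseSum n (k + 1) + chooseSum n k := by
  induction k with
  | zero => simp [chooseSum]
  | succ k ih =>
    rw [chooseSum_succ (n + 1), ih, Nat.choose_succ_succ', chooseSum_succ n (k + 1),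
      chooseSum_succ n k]
    ring

lemma chooseSum_succ_self (n : ℕ) : chooseSum n (n + 1) = 2 ^ n := Nat.sum_range_choose n

lemma two_pow_pred_le_chooseSum (d : ℕ) : 2 ^ (d - 1) ≤ chooseSum d (d / 2 + 1) := by
  have halfway (m : ℕ) : chooseSum (2 * m + 1) (m + 1) = 2 ^ (2 * m) := by
    rw [chooseSum, Nat.sum_range_choose_halfway, pow_mul]; norm_num
  obtain ⟨m, rfl | rfl⟩ := Nat.even_or_odd' d
  · rcases m with _ | m
    · simp [chooseSum]
    have hodd : 2 * (m + 1) - 1 = 2 * m + 1 := by omega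
    have hhalf : 2 * (m + 1) / 2 + 1 = m + 1 + 1 := by omega
    rw [hodd, hhalf, show 2 * (m + 1) = 2 * m + 1 + 1 by ring, chooseSum_succ_succ,
      chooseSum_succ, halfway, pow_succ]
    omega
  · rw [show (2 * m + 1) / 2 = m by omega, halfway]
    simp

lemma choose_mul_choose_add_two_le_sq (n j : ℕ) :
    n.choose j * n.choose (j + 2) ≤ n.choose (j + 1) ^ 2 := by
  rcases lt_or_ge n (j + 2) with hn | hn
  · simp [Nat.choose_eq_zero_of_lt hn]
  have hpos : 0 < (j + 2) * (n - j) := Nat.mul_pos (by omega) (by omega)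
  refine Nat.le_of_mul_le_mul_right ?_ hpos
  calc n.choose j * n.choose (j + 2) * ((j + 2) * (n - j))
      = (n.choose j * (n - j)) * (n.choose (j + 1 + 1) * (j + 1 + 1)) := by ring
    _ = (n.choose (j + 1) * (j + 1)) * (n.choose (j + 1) * (n - (j + 1))) := by
      rw [Nat.choose_succ_right_eq, Nat.choose_succ_right_eq]
    _ = n.choose (j + 1) ^ 2 * ((j + 1) * (n - (j + 1))) := by ring
    _ ≤ n.choose (j + 1) ^ 2 * ((j + 2) * (n - j)) := by gcongr <;> omega

-- The inductive step when the larger slice `B` is small, split by the position of `|B|` and `|C|`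
-- relative to `P = ∑_{i≤j} C(n,i)`. Here `p, q, s = C(n,j), C(n,j+1), C(n,j+2)`, `X` and `Y` are
-- the neighbourhood sizes of the slices, and `hlog` is log-concavity.
lemma step_ineq_of_both_ge {p q s P t tu tv X Y : ℕ} (hlog : p * s ≤ q ^ 2) (hq : 0 < q)
    (ht : t ≤ p + q) (htuv : t ≤ p + tu + tv)
    (hX : q * (P + q) + tu * s ≤ q * X) (hY : q * (P + q) + tv * s ≤ q * Y) :
    (p + q) * (2 * P + q) + t * (q + s) ≤ (p + q) * (X + Y) := by
  refine Nat.le_of_mul_le_mul_left ?_ hq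
  zify at *
  nlinarith [(mul_nonneg (by linarith) (by linarith) : (0 : ℤ) ≤ (p + q - t) * (q ^ 2 - p * s)),
    (mul_nonneg (by positivity) (by linarith) : (0 : ℤ) ≤ (p + q) * s * (p + tu + tv - t)),
    mul_le_mul_of_nonneg_left hX (by positivity : (0 : ℤ) ≤ p + q),
    mul_le_mul_of_nonneg_left hY (by positivity : (0 : ℤ) ≤ p + q)]

lemma step_ineq_of_ge_of_lt {p q s P t tu sv X Y : ℕ} (hlog : p * s ≤ q ^ 2) (hp : 0 < p)
    (hq : 0 < q) (ht : t ≤ tu + sv) (htu : (p + q) * tu ≤ t * q)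
    (hX : q * (P + q) + tu * s ≤ q * X) (hY : p * P + sv * q ≤ p * Y) :
    (p + q) * (2 * P + q) + t * (q + s) ≤ (p + q) * (X + Y) := by
  refine Nat.le_of_mul_le_mul_left ?_ (Nat.mul_pos hp hq)
  zify at *
  nlinarith [(mul_nonneg (by linarith) (by linarith) :
      (0 : ℤ) ≤ (t * q - (p + q) * tu) * (q ^ 2 - p * s)),
    (mul_nonneg (by positivity) (by linarith) : (0 : ℤ) ≤ (p + q) * q ^ 2 * (tu + sv - t)),
    mul_le_mul_of_nonneg_left hX (by positivity : (0 : ℤ) ≤ (p + q) * p),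
    mul_le_mul_of_nonneg_left hY (by positivity : (0 : ℤ) ≤ (p + q) * q)]

lemma step_ineq_of_both_lt {p q s P t su sv X Y : ℕ} (hlog : p * s ≤ q ^ 2) (hp : 0 < p)
    (ht : p + t ≤ su + sv) (hX : p * P + su * q ≤ p * X) (hY : p * P + sv * q ≤ p * Y) :
    (p + q) * (2 * P + q) + t * (q + s) ≤ (p + q) * (X + Y) := by
  refine Nat.le_of_mul_le_mul_left ?_ hp
  zify at *
  nlinarith [(mul_nonneg (by positivity) (by linarith) : (0 : ℤ) ≤ t * (q ^ 2 - p * s)),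
    (mul_nonneg (by positivity) (by linarith) : (0 : ℤ) ≤ (p + q) * q * (su + sv - (p + t))),
    mul_le_mul_of_nonneg_left hX (by positivity : (0 : ℤ) ≤ p + q),
    mul_le_mul_of_nonneg_left hY (by positivity : (0 : ℤ) ≤ p + q)]

/-- Linear interpolation, with the denominator `C(n,k)` cleared, of Harper's vertex-isoperimetric
inequality between consecutive Hamming balls: a set of size `∑_{i<k} C(n,i) + t` has a closed
neighbourhood of size at least `∑_{i≤k} C(n,i) + t · C(n,k+1) / C(n,k)`. -/
def HarperBound (n : ℕ) : Prop :=
  ∀ (A : Finset (Fin n → Bool)) (k t : ℕ), k ≤ n → 1 ≤ t → t ≤ n.choose k →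
    chooseSum n k + t ≤ A.card →
    n.choose k * chooseSum n (k + 1) + t * n.choose (k + 1) ≤ n.choose k * (closedNbhd A).card

section Harper

variable {n : ℕ}

lemma harperBound_top (A : Finset (Fin n → Bool)) {t : ℕ} (ht1 : 1 ≤ t) (ht : t ≤ n.choose n)
    (hA : chooseSum n n + t ≤ A.card) :
    n.choose n * chooseSum n (n + 1) + t * n.choose (n + 1) ≤ n.choose n * (closedNbhd A).card := by
  have := card_le_card (subset_closedNbhd A)
  have := chooseSum_succ n n
  simp_all only [Nat.choose_self, Nat.choose_succ_self, chooseSum_succ_self]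
  omega

lemma HarperBound.chooseSum_le (ih : HarperBound n) {A : Finset (Fin n → Bool)} {j : ℕ}
    (hj : j ≤ n) (hA : chooseSum n (j + 1) ≤ A.card) :
    chooseSum n (j + 2) ≤ (closedNbhd A).card := by
  have hp := Nat.choose_pos hj
  have := ih A j (n.choose j) hj hp le_rfl (by rwa [← chooseSum_succ])
  rw [chooseSum_succ]
  exact Nat.le_of_mul_le_mul_left (by linarith) hp

lemma HarperBound.le_of_one_le (ih : HarperBound n) (A : Finset (Fin n → Bool)) {k s : ℕ}
    (hk1 : 1 ≤ k) (hk : k ≤ n) (hs : s ≤ n.choose k) (hA : chooseSum n k + s ≤ A.card) :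
    n.choose k * chooseSum n (k + 1) + s * n.choose (k + 1) ≤ n.choose k * (closedNbhd A).card := by
  rcases Nat.eq_zero_or_pos s with rfl | hs1
  · obtain ⟨j, rfl⟩ : ∃ j, k = j + 1 := ⟨k - 1, by omega⟩
    simpa using Nat.mul_le_mul_left _ (ih.chooseSum_le (by omega) (by omega))
  · exact ih A k s hk hs1 hs hA

lemma HarperBound.step_of_large (ih : HarperBound n) (B : Finset (Fin n → Bool)) {k t R : ℕ}
    (hk : k ≤ n) (ht1 : 1 ≤ t) (ht : t ≤ (n + 1).choose k)
    (hB : (n + 1).choose k * chooseSum n k + t * n.choose k ≤ (n + 1).choose k * B.card)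
    (hR : (closedNbhd B).card + B.card ≤ R) :
    (n + 1).choose k * chooseSum (n + 1) (k + 1) + t * (n + 1).choose (k + 1) ≤
      (n + 1).choose k * R := by
  set D := (n + 1).choose k
  set q := n.choose k
  have hq : 0 < q := Nat.choose_pos hk
  have hD : 0 < D := Nat.choose_pos (by omega)
  -- `B` exceeds `∑_{i<k} C(n,i)` by some `t'` with `t/D ≤ t'/q`, capped at `q` so that `ih` applies
  obtain ⟨t', ht'1, ht'q, hBt', htt'⟩ : ∃ t', 1 ≤ t' ∧ t' ≤ q ∧ chooseSum n k + t' ≤ B.card ∧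
      t * q ≤ D * t' := by
    have hBk : D * chooseSum n k < D * B.card := by nlinarith
    have hBk := lt_of_mul_lt_mul_left hBk
    refine ⟨min (B.card - chooseSum n k) q, by omega, min_le_right _ _, by omega, ?_⟩
    rcases le_total (B.card - chooseSum n k) q with hmin | hmin
    · rw [min_eq_left hmin, Nat.mul_sub]; omega
    · rw [min_eq_right hmin]; exact Nat.mul_le_mul_right q ht
  have hX : D * chooseSum n (k + 1) + t * n.choose (k + 1) ≤ D * (closedNbhd B).card := by
    refine Nat.le_of_mul_le_mul_left ?_ hq
    nlinarith [Nat.mul_le_mul_left D (ih B k t' hk ht'1 ht'q hBt'),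
      Nat.mul_le_mul_right (n.choose (k + 1)) htt']
  calc D * chooseSum (n + 1) (k + 1) + t * (n + 1).choose (k + 1)
      = (D * chooseSum n (k + 1) + t * n.choose (k + 1)) + (D * chooseSum n k + t * q) := by
        rw [chooseSum_succ_succ, Nat.choose_succ_succ']; ring
    _ ≤ D * (closedNbhd B).card + D * B.card := add_le_add hX hB
    _ ≤ D * R := by rw [← mul_add]; exact Nat.mul_le_mul_left D hR

lemma HarperBound.step_of_small (ih : HarperBound n) (B C : Finset (Fin n → Bool)) {j t R : ℕ}
    (hj : j + 1 ≤ n) (ht : t ≤ (n + 1).choose (j + 1))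
    (hBC : chooseSum (n + 1) (j + 1) + t ≤ B.card + C.card) (hCB : C.card ≤ B.card)
    (hB : (n + 1).choose (j + 1) * B.card <
      (n + 1).choose (j + 1) * chooseSum n (j + 1) + t * n.choose (j + 1))
    (hR : (closedNbhd B).card + (closedNbhd C).card ≤ R) :
    (n + 1).choose (j + 1) * chooseSum (n + 1) (j + 2) + t * (n + 1).choose (j + 2) ≤
      (n + 1).choose (j + 1) * R := by
  set p := n.choose j
  set q := n.choose (j + 1)
  set s := n.choose (j + 2)
  set P := chooseSum n (j + 1)
  have hp : 0 < p := Nat.choose_pos (by omega)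
  have hq : 0 < q := Nat.choose_pos hj
  have hlog : p * s ≤ q ^ 2 := choose_mul_choose_add_two_le_sq n j
  have hP : P = chooseSum n j + p := chooseSum_succ n j
  have hD : (n + 1).choose (j + 1) = p + q := Nat.choose_succ_succ' n j
  rw [hD] at ht hB ⊢
  rw [chooseSum_succ_succ] at hBC
  suffices (p + q) * (2 * P + q) + t * (q + s) ≤
      (p + q) * ((closedNbhd B).card + (closedNbhd C).card) by
    rw [chooseSum_succ_succ, chooseSum_succ, Nat.choose_succ_succ' n (j + 1)]
    exact (le_of_eq (by ring)).trans (this.trans (Nat.mul_le_mul_left _ hR))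
  have hC : chooseSum n j < C.card := by nlinarith
  have high (S : Finset (Fin n → Bool)) (r : ℕ) (hr : r ≤ q) (hS : P + r ≤ S.card) :
      q * (P + q) + r * s ≤ q * (closedNbhd S).card := by
    simpa only [chooseSum_succ n (j + 1)] using ih.le_of_one_le S le_add_self hj hr hS
  rcases le_or_gt P B.card with hPB | hBP
  · have htu : (p + q) * (B.card - P) ≤ t * q := by
      zify [hPB] at hB ⊢; nlinarith
    have hBq : B.card - P ≤ q :=
      Nat.le_of_mul_le_mul_left (htu.trans (Nat.mul_le_mul_right q ht)) (by omega)
    have hX := high B (B.card - P) hBq (by omega)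
    rcases le_or_gt P C.card with hPC | hCP
    · exact step_ineq_of_both_ge hlog hq ht (tv := C.card - P) (by omega) hX
        (high C _ (by omega) (by omega))
    · exact step_ineq_of_ge_of_lt hlog hp hq (sv := C.card - chooseSum n j) (by omega) htu hX
        (ih C j _ (by omega) (by omega) (by omega) (by omega))
  · exact step_ineq_of_both_lt hlog hp (su := B.card - chooseSum n j)
      (sv := C.card - chooseSum n j) (by omega)
      (ih B j _ (by omega) (by omega) (by omega) (by omega))
      (ih C j _ (by omega) (by omega) (by omega) (by omega))

lemma harperBound_succ (ih : HarperBound n) : HarperBound (n + 1) := by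
  intro A k t hk ht1 ht hA
  rcases hk.eq_or_lt with rfl | hk
  · exact harperBound_top A ht1 ht hA
  obtain ⟨b, hb⟩ : ∃ b, (headSlice A !b).card ≤ (headSlice A b).card := by
    rcases le_total (headSlice A true).card (headSlice A false).card with h | h
    exacts [⟨false, h⟩, ⟨true, h⟩]
  have hsplit := card_headSlice_add_card_headSlice_not A b
  by_cases hlarge : (n + 1).choose k * chooseSum n k + t * n.choose k ≤
      (n + 1).choose k * (headSlice A b).card
  · exact ih.step_of_large _ (by omega) ht1 ht hlarge
      (card_closedNbhd_headSlice_add_card_headSlice_le A b)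
  obtain ⟨j, rfl⟩ : ∃ j, k = j + 1 := by
    refine Nat.exists_eq_add_one.2 (Nat.pos_of_ne_zero ?_)
    rintro rfl
    simp [chooseSum] at hlarge hA ht
    omega
  exact ih.step_of_small _ _ (by omega) ht (by omega) hb (by omega)
    (card_closedNbhd_headSlice_add_card_closedNbhd_headSlice_not_le A b)

theorem harperBound : ∀ n, HarperBound n
  | 0 => fun A k _ hk ht1 ht hA => by
    obtain rfl : k = 0 := by omega
    exact harperBound_top A ht1 ht hA
  | n + 1 => harperBound_succ (harperBound n)

end Harper

section BallInterior

variable {d : ℕ}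

lemma card_le_chooseSum_of_card_closedNbhd_le (S : Finset (Fin d → Bool)) {k : ℕ} (hk : k < d)
    (hS : (closedNbhd S).card ≤ chooseSum d (k + 1)) : S.card ≤ chooseSum d k := by
  by_contra! hlt
  have := harperBound d S k 1 hk.le le_rfl (Nat.choose_pos hk.le) hlt
  have := Nat.mul_le_mul_left (d.choose k) hS
  have : 0 < d.choose (k + 1) := Nat.choose_pos hk
  omega

def ballInterior (A : Finset (Fin d → Bool)) (r : ℕ) : Finset (Fin d → Bool) :=
  univ.filter fun x => ∀ y, hammingDist x y ≤ r → y ∈ A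

lemma ballInterior_zero_subset (A : Finset (Fin d → Bool)) : ballInterior A 0 ⊆ A := by
  intro x hx
  simp only [ballInterior, mem_filter, mem_univ, true_and] at hx
  exact hx x (by simp)

lemma closedNbhd_ballInterior_succ_subset (A : Finset (Fin d → Bool)) (r : ℕ) :
    closedNbhd (ballInterior A (r + 1)) ⊆ ballInterior A r := by
  intro z hz
  obtain ⟨x, hx, hzx⟩ := mem_closedNbhd.1 hz
  simp only [ballInterior, mem_filter, mem_univ, true_and] at hx ⊢
  intro y hy
  exact hx y (by linarith [hammingDist_triangle x z y, hammingDist_comm x z])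

lemma card_ballInterior_le {A : Finset (Fin d → Bool)} {m : ℕ} (hm : m < d)
    (hA : A.card ≤ chooseSum d (m + 1)) (r : ℕ) :
    (ballInterior A r).card ≤ chooseSum d (m - r + 1) := by
  induction r with
  | zero => exact (card_le_card (ballInterior_zero_subset A)).trans hA
  | succ r ih =>
    have hN := (card_le_card (closedNbhd_ballInterior_succ_subset A r)).trans ih
    rcases lt_or_ge r m with hrm | hmr
    · rw [show m - r + 1 = m - (r + 1) + 1 + 1 by omega] at hN
      exact card_le_chooseSum_of_card_closedNbhd_le _ (by omega) hN
    · rw [show m - (r + 1) = m - r by omega]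
      exact (card_le_card (subset_closedNbhd _)).trans hN

end BallInterior

theorem stmt6_general (d r : ℕ)
    (A : Finset (Fin d → Bool)) (hA : A.card ≤ 2 ^ (d - 1)) :
    (Finset.univ.filter (fun x : Fin d → Bool =>
        ∀ y : Fin d → Bool, hammingDist x y ≤ r → y ∈ A)).card ≤
      ∑ i ∈ Finset.range (d / 2 - r + 1), d.choose i := by
  rcases Nat.eq_zero_or_pos d with rfl | hd
  · exact (card_le_univ _).trans (by simp)
  exact card_ballInterior_le (Nat.div_lt_self hd one_lt_two)
    (hA.trans (two_pow_pred_le_chooseSum d)) r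

/-- Let `d` be even, `d ≥ 2`, `1 ≤ r ≤ d/2`, and let
`A ⊆ {0,1}^d` with `|A| ≤ 2^(d-1)`. Then the number of points `x` whose
Hamming ball of radius `r` lies entirely in `A` is at most
`∑_{i=0}^{d/2 − r} C(d,i)`, the size of a Hamming ball of radius `d/2 − r`. -/
theorem stmt6 (d r : ℕ) (hdeven : Even d) (hd : 2 ≤ d)
    (hr : 1 ≤ r) (hrd : r ≤ d / 2)
    (A : Finset (Fin d → Bool)) (hA : A.card ≤ 2 ^ (d - 1)) :
    (Finset.univ.filter (fun x : Fin d → Bool =>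
        ∀ y : Fin d → Bool, hammingDist x y ≤ r → y ∈ A)).card ≤
      ∑ i ∈ Finset.range (d / 2 - r + 1), d.choose i :=
  stmt6_general d r A hA
end
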